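/- arXiv:1808.08764 — 2 statements merged into one kernel-verified Lean document; each statement's English description precedes it below -/
import Mathlib

section
/- For Hermitian positive definite matrices p₁, p₂, the affine-invariant Riemannian distance is symmetric: ‖Log(p₁^{-1/2} p₂ p₁^{-1/2})‖_F = ‖Log(p₂^{-1/2} p₁ p₂^{-1/2})‖_F. -/
open Matrix
open scoped ComplexOrder Classical

/-- Matrix logarithm of a Hermitian (in particular HPD) matrix, via the spectral theorem. -/
noncomputable def mLog {d : ℕ} (A : Matrix (Fin d) (Fin d) ℂ) : Matrix (Fin d) (Fin d) ℂ :=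
  if hA : A.IsHermitian then
    (hA.eigenvectorUnitary : Matrix (Fin d) (Fin d) ℂ) *
      Matrix.diagonal (fun i => (Real.log (hA.eigenvalues i) : ℂ)) *
      (star hA.eigenvectorUnitary : Matrix (Fin d) (Fin d) ℂ)
  else 0

/-- Matrix exponential. -/
noncomputable def mExp {d : ℕ} (A : Matrix (Fin d) (Fin d) ℂ) : Matrix (Fin d) (Fin d) ℂ :=
  NormedSpace.exp A

/-- Hermitian positive (semi)definite square root. -/
noncomputable def msqrt {d : ℕ} (A : Matrix (Fin d) (Fin d) ℂ) : Matrix (Fin d) (Fin d) ℂ :=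
  if hA : A.PosSemidef then
    (hA.1.eigenvectorUnitary : Matrix (Fin d) (Fin d) ℂ) *
      Matrix.diagonal ((↑) ∘ Real.sqrt ∘ hA.1.eigenvalues) *
      (star hA.1.eigenvectorUnitary : Matrix (Fin d) (Fin d) ℂ)
  else 1

/-- Frobenius norm. -/
noncomputable def frobNorm {d : ℕ} (A : Matrix (Fin d) (Fin d) ℂ) : ℝ :=
  Real.sqrt ((Aᴴ * A).trace.re)

/-- Affine-invariant Riemannian distance. -/
noncomputable def deltaR {d : ℕ} (p₁ p₂ : Matrix (Fin d) (Fin d) ℂ) : ℝ :=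
  frobNorm (mLog ((msqrt p₁)⁻¹ * p₂ * (msqrt p₁)⁻¹))

/-- Real matrix power of an HPD matrix: `x^t = Exp (t • Log x)`. -/
noncomputable def mPow {d : ℕ} (A : Matrix (Fin d) (Fin d) ℂ) (t : ℝ) : Matrix (Fin d) (Fin d) ℂ :=
  mExp ((t : ℂ) • mLog A)

/-- Riemannian logarithmic map at `p`. -/
noncomputable def logMap {d : ℕ} (p q : Matrix (Fin d) (Fin d) ℂ) : Matrix (Fin d) (Fin d) ℂ :=
  msqrt p * mLog ((msqrt p)⁻¹ * q * (msqrt p)⁻¹) * msqrt p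

/-- Riemannian exponential map at `p`. -/
noncomputable def expMap {d : ℕ} (p h : Matrix (Fin d) (Fin d) ℂ) : Matrix (Fin d) (Fin d) ℂ :=
  msqrt p * mExp ((msqrt p)⁻¹ * h * (msqrt p)⁻¹) * msqrt p

/-- Affine-invariant geodesic from `p₁` to `p₂`. -/
noncomputable def geo {d : ℕ} (p₁ p₂ : Matrix (Fin d) (Fin d) ℂ) (t : ℝ) :
    Matrix (Fin d) (Fin d) ℂ :=
  msqrt p₁ * mPow ((msqrt p₁)⁻¹ * p₂ * (msqrt p₁)⁻¹) t * msqrt p₁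

/-!
Write `S = p₁^{1/2}`, `T = p₂^{1/2}` and `N = S⁻¹ T`. The two arguments of `Log` are then
`N Nᴴ` and `(Nᴴ N)⁻¹`. Now `N Nᴴ` and `Nᴴ N` have the same characteristic polynomial, hence the
same eigenvalues, while `‖Log X‖_F² = ∑ᵢ (log λᵢ(X))²` does not change under `X ↦ X⁻¹`, which only
flips the signs of the `log λᵢ`.
-/

namespace Matrix.IsHermitian

variable {𝕜 : Type*} [RCLike 𝕜] {n : Type*} [Fintype n] [DecidableEq n] {A : Matrix n n 𝕜}

lemma trace_cfc (hA : A.IsHermitian) (f : ℝ → ℝ) :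
    (cfc f A).trace = ∑ i, (f (hA.eigenvalues i) : 𝕜) := by
  rw [hA.cfc_eq, IsHermitian.cfc, Unitary.conjStarAlgAut_apply, trace_mul_cycle,
    Unitary.coe_star_mul_self, one_mul, trace_diagonal]
  rfl

end Matrix.IsHermitian

section

variable {d : ℕ} {A : Matrix (Fin d) (Fin d) ℂ}

lemma mLog_eq_cfc (hA : A.IsHermitian) : mLog A = cfc Real.log A := by
  rw [mLog, dif_pos hA, hA.cfc_eq, IsHermitian.cfc, Unitary.conjStarAlgAut_apply]
  rfl

lemma msqrt_eq_cfc (hA : A.PosSemidef) : msqrt A = cfc Real.sqrt A := by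
  rw [msqrt, dif_pos hA, hA.1.cfc_eq, IsHermitian.cfc, Unitary.conjStarAlgAut_apply]
  rfl

lemma frobNorm_neg (A : Matrix (Fin d) (Fin d) ℂ) : frobNorm (-A) = frobNorm A := by
  rw [frobNorm, frobNorm, conjTranspose_neg, neg_mul_neg]

lemma frobNorm_cfc (hA : A.IsHermitian) (f : ℝ → ℝ) :
    frobNorm (cfc f A) = √(∑ i, f (hA.eigenvalues i) ^ 2) := by
  rw [frobNorm, ← star_eq_conjTranspose, (cfc_predicate f A).star_eq,
    ← cfc_mul f f A (A.finite_real_spectrum.continuousOn f) (A.finite_real_spectrum.continuousOn f),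
    hA.trace_cfc]
  simp [sq]

lemma frobNorm_mLog (hA : A.IsHermitian) :
    frobNorm (mLog A) = √(∑ i, Real.log (hA.eigenvalues i) ^ 2) := by
  rw [mLog_eq_cfc hA, frobNorm_cfc hA]

lemma frobNorm_mLog_eq_of_charpoly_eq {B : Matrix (Fin d) (Fin d) ℂ} (hA : A.IsHermitian)
    (hB : B.IsHermitian) (h : A.charpoly = B.charpoly) :
    frobNorm (mLog A) = frobNorm (mLog B) := by
  rw [frobNorm_mLog hA, frobNorm_mLog hB, (hA.eigenvalues_eq_eigenvalues_iff hB).2 h]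

lemma frobNorm_mLog_mul_conjTranspose_comm (N : Matrix (Fin d) (Fin d) ℂ) :
    frobNorm (mLog (N * Nᴴ)) = frobNorm (mLog (Nᴴ * N)) :=
  frobNorm_mLog_eq_of_charpoly_eq (isHermitian_mul_conjTranspose_self N)
    (isHermitian_conjTranspose_mul_self N) (charpoly_mul_comm N Nᴴ)

lemma mLog_inv (hA : A.IsHermitian) (hA' : IsUnit A) : mLog A⁻¹ = -mLog A := by
  have hinv : A⁻¹ = cfc (·⁻¹ : ℝ → ℝ) A := by
    rw [cfc_ringInverse_id (R := ℝ) A hA', nonsing_inv_eq_ringInverse]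
  rw [mLog_eq_cfc hA, mLog_eq_cfc hA.inv, hinv, ← cfc_comp' Real.log (·⁻¹) A
    ((A.finite_real_spectrum.image _).continuousOn _) (A.finite_real_spectrum.continuousOn _)]
  simp only [Real.log_inv]
  exact cfc_neg _ _

lemma frobNorm_mLog_inv (hA : A.IsHermitian) (hA' : IsUnit A) :
    frobNorm (mLog A⁻¹) = frobNorm (mLog A) := by
  rw [mLog_inv hA hA', frobNorm_neg]

lemma isHermitian_msqrt (A : Matrix (Fin d) (Fin d) ℂ) : (msqrt A).IsHermitian := by
  by_cases hA : A.PosSemidef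
  · rw [msqrt_eq_cfc hA]
    exact cfc_predicate _ A
  · rw [msqrt, dif_neg hA]
    exact isHermitian_one

lemma msqrt_mul_self (hA : A.PosSemidef) : msqrt A * msqrt A = A := by
  have hsq : (spectrum ℝ A).EqOn (fun x ↦ √x * √x) id := by
    intro x hx
    obtain ⟨i, rfl⟩ := hA.1.spectrum_real_eq_range_eigenvalues ▸ hx
    exact Real.mul_self_sqrt (hA.eigenvalues_nonneg i)
  rw [msqrt_eq_cfc hA, ← cfc_mul _ _ A (A.finite_real_spectrum.continuousOn _)
    (A.finite_real_spectrum.continuousOn _), cfc_congr hsq]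
  exact cfc_id ℝ A hA.1

lemma isUnit_msqrt (hA : A.PosDef) : IsUnit (msqrt A) := by
  rw [isUnit_iff_isUnit_det]
  refine isUnit_of_mul_isUnit_left (y := (msqrt A).det) ?_
  rw [← det_mul, msqrt_mul_self hA.posSemidef, ← isUnit_iff_isUnit_det]
  exact hA.isUnit

end

theorem deltaR_symm {d : ℕ} (p₁ p₂ : Matrix (Fin d) (Fin d) ℂ)
    (hp₁ : p₁.PosDef) (hp₂ : p₂.PosDef) :
    frobNorm (mLog ((msqrt p₁)⁻¹ * p₂ * (msqrt p₁)⁻¹)) =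
      frobNorm (mLog ((msqrt p₂)⁻¹ * p₁ * (msqrt p₂)⁻¹)) := by
  set S := msqrt p₁
  set T := msqrt p₂
  have hS : S.IsHermitian := isHermitian_msqrt p₁
  have hT : T.IsHermitian := isHermitian_msqrt p₂
  have hSS : S * S = p₁ := msqrt_mul_self hp₁.posSemidef
  have hTT : T * T = p₂ := msqrt_mul_self hp₂.posSemidef
  have hSu : IsUnit S := isUnit_msqrt hp₁
  set N := S⁻¹ * T with hN
  have hNu : IsUnit N := (isUnit_nonsing_inv_iff.2 hSu).mul (isUnit_msqrt hp₂)
  have hNH : Nᴴ = T * S⁻¹ := by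
    rw [conjTranspose_mul, conjTranspose_nonsing_inv, hS.eq, hT.eq]
  have hA : S⁻¹ * p₂ * S⁻¹ = N * Nᴴ := by
    rw [hNH, hN, ← hTT]
    simp only [mul_assoc]
  have hB : T⁻¹ * p₁ * T⁻¹ = (Nᴴ * N)⁻¹ := by
    rw [hNH, hN, ← hSS]
    simp only [Matrix.mul_inv_rev, nonsing_inv_nonsing_inv S ((isUnit_iff_isUnit_det S).1 hSu),
      mul_assoc]
  rw [hA, hB, frobNorm_mLog_inv (isHermitian_conjTranspose_mul_self N) (hNu.star.mul hNu),
    frobNorm_mLog_mul_conjTranspose_comm]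
end

section
/- The affine-invariant inner product is invariant under congruence: for any invertible matrix a, Hermitian positive definite p, and Hermitian h₁, h₂, one has ⟨a* h₁ a, a* h₂ a⟩_{a* p a} = ⟨h₁, h₂⟩_p. -/
open Matrix
open scoped ComplexOrder Classical

/-- Affine-invariant metric (inner product) at `p`. -/
noncomputable def innerAI {d : ℕ} (p h₁ h₂ : Matrix (Fin d) (Fin d) ℂ) : ℂ :=
  (((msqrt p)⁻¹ * h₁ * (msqrt p)⁻¹) * ((msqrt p)⁻¹ * h₂ * (msqrt p)⁻¹)).trace

/-! Since `msqrt p` squares to `p`, cyclicity of the trace turns `innerAI p h₁ h₂` into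
`Tr (p⁻¹ h₁ p⁻¹ h₂)`. Congruence by `a` replaces each factor `p⁻¹ h` by its conjugate
`a⁻¹ (p⁻¹ h) a`, and the trace is invariant under conjugation. -/

lemma msqrt_mul_self_s12 {d : ℕ} {p : Matrix (Fin d) (Fin d) ℂ} (hp : p.PosSemidef) :
    msqrt p * msqrt p = p := by
  set U : Matrix (Fin d) (Fin d) ℂ := (hp.1.eigenvectorUnitary : Matrix (Fin d) (Fin d) ℂ)
  have hUU : star U * U = 1 := Unitary.coe_star_mul_self hp.1.eigenvectorUnitary
  have hsq : diagonal (((↑) : ℝ → ℂ) ∘ Real.sqrt ∘ hp.1.eigenvalues) *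
      diagonal ((↑) ∘ Real.sqrt ∘ hp.1.eigenvalues) = diagonal ((↑) ∘ hp.1.eigenvalues) := by
    rw [diagonal_mul_diagonal]
    congr 1
    funext i
    simp only [Function.comp_apply, ← Complex.ofReal_mul,
      Real.mul_self_sqrt (hp.eigenvalues_nonneg i)]
  have hspec := hp.1.spectral_theorem
  rw [Unitary.conjStarAlgAut_apply] at hspec
  calc msqrt p * msqrt p
      = U * (diagonal ((↑) ∘ Real.sqrt ∘ hp.1.eigenvalues) * (star U * U) *
          diagonal ((↑) ∘ Real.sqrt ∘ hp.1.eigenvalues)) * star U := by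
        simp only [msqrt, dif_pos hp, U, mul_assoc]
    _ = p := by rw [hUU, mul_one, hsq]; exact hspec.symm

lemma innerAI_eq_trace {d : ℕ} {p : Matrix (Fin d) (Fin d) ℂ} (hp : p.PosSemidef)
    (h₁ h₂ : Matrix (Fin d) (Fin d) ℂ) :
    innerAI p h₁ h₂ = (p⁻¹ * h₁ * (p⁻¹ * h₂)).trace := by
  set s := msqrt p
  have hinv : p⁻¹ = s⁻¹ * s⁻¹ := by rw [← msqrt_mul_self_s12 hp, Matrix.mul_inv_rev]
  calc innerAI p h₁ h₂ = (s⁻¹ * h₁ * s⁻¹ * s⁻¹ * h₂ * s⁻¹).trace := by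
        simp only [innerAI, s, mul_assoc]
    _ = (s⁻¹ * (s⁻¹ * h₁ * s⁻¹ * s⁻¹ * h₂)).trace := trace_mul_comm _ _
    _ = (p⁻¹ * h₁ * (p⁻¹ * h₂)).trace := by simp only [hinv, mul_assoc]

lemma inv_conj_mul_conj {n R : Type*} [Fintype n] [DecidableEq n] [CommRing R] [StarRing R]
    {a : Matrix n n R} (ha : IsUnit a.det) (p h : Matrix n n R) :
    (aᴴ * p * a)⁻¹ * (aᴴ * h * a) = a⁻¹ * (p⁻¹ * h) * a := by
  have haH : IsUnit aᴴ.det := by rw [det_conjTranspose]; exact ha.star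
  simp only [Matrix.mul_inv_rev, mul_assoc, nonsing_inv_mul_cancel_left _ _ haH]

theorem innerAI_congruence_invariant_general {d : ℕ} (p h₁ h₂ a : Matrix (Fin d) (Fin d) ℂ)
    (hp : p.PosDef) (ha : IsUnit a.det) :
    innerAI (aᴴ * p * a) (aᴴ * h₁ * a) (aᴴ * h₂ * a) = innerAI p h₁ h₂ := by
  rw [innerAI_eq_trace (hp.posSemidef.conjTranspose_mul_mul_same a), innerAI_eq_trace hp.posSemidef,
    inv_conj_mul_conj ha, inv_conj_mul_conj ha]
  calc (a⁻¹ * (p⁻¹ * h₁) * a * (a⁻¹ * (p⁻¹ * h₂) * a)).trace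
      = (a⁻¹ * (p⁻¹ * h₁ * (p⁻¹ * h₂)) * a).trace := by
        simp only [mul_assoc, mul_nonsing_inv_cancel_left _ _ ha]
    _ = (p⁻¹ * h₁ * (p⁻¹ * h₂)).trace := trace_conj' ((isUnit_iff_isUnit_det a).2 ha) _

theorem innerAI_congruence_invariant {d : ℕ} (p h₁ h₂ a : Matrix (Fin d) (Fin d) ℂ)
    (hp : p.PosDef) (hh₁ : h₁.IsHermitian) (hh₂ : h₂.IsHermitian) (ha : IsUnit a.det) :
    innerAI (aᴴ * p * a) (aᴴ * h₁ * a) (aᴴ * h₂ * a) = innerAI p h₁ h₂ :=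
  innerAI_congruence_invariant_general p h₁ h₂ a hp ha
end
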